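/- arXiv:1309.1578 — 6 statements merged into one kernel-verified Lean document; each statement's English description precedes it below -/
import Mathlib

section
/- For integers n > m ≥ 2, the function γ_{m,n}(u) = (1/(n−m)) Σ_{k=m+1}^{n} [ (k/i)·φ′_{Z_k}(ku)/φ_{Z_k}(ku) − e^{iuk} ] satisfies sup_{−π ≤ u ≤ π} |γ_{m,n}(u)| ≤ C (1 + log(n/m))/(n−m) for an absolute constant C, where φ_{Z_k}(t) = 1 + (e^{it}−1)/k. -/
/-- The characteristic function of the Bernoulli variable `Z_k` with `P(Z_k = 1) = 1/k`. -/
noncomputable def phiZ (k : ℕ) (t : ℝ) : ℂ := 1 + (Complex.exp (Complex.I * t) - 1) / k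

/-!
Since `φ_k'(t) = i e^{it} / k`, the `k`-th summand is `e^{it}/φ_k(t) - e^{it} = e^{it}(1 - φ_k(t))/φ_k(t)`
with `t = ku`. As `|1 - φ_k(t)| ≤ 2/k`, for `k ≥ 3` we get `|φ_k(t)| ≥ 1/3` and the summand is at
most `6/k` uniformly in `u`. Summing over `m < k ≤ n` gives `6 (H_n - H_m) ≤ 6 (1 + log (n/m))`.
-/

open Complex

lemma phiZ_hasDerivAt (k : ℕ) (t : ℝ) :
    HasDerivAt (phiZ k) (I * exp (I * t) / k) t := by
  have hexp : HasDerivAt (fun t : ℝ => exp (I * t)) (exp (I * t) * I) t := by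
    simpa using (((hasDerivAt_id t).ofReal_comp).const_mul I).cexp
  exact (((hexp.sub_const 1).div_const (k : ℂ)).const_add 1).congr_deriv (by ring)

lemma div_I_mul_deriv_phiZ {k : ℕ} (hk : k ≠ 0) (t : ℝ) :
    (k / I) * deriv (phiZ k) t = exp (I * t) := by
  rw [(phiZ_hasDerivAt k t).deriv]
  field_simp

lemma norm_exp_I_mul_ofReal_sub_one_le_two (t : ℝ) : ‖exp (I * t) - 1‖ ≤ 2 := by
  calc ‖exp (I * t) - 1‖ ≤ ‖exp (I * t)‖ + ‖(1 : ℂ)‖ := norm_sub_le _ _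
    _ = 2 := by rw [norm_exp_I_mul_ofReal, norm_one]; norm_num

lemma norm_one_sub_phiZ_le (k : ℕ) (t : ℝ) : ‖1 - phiZ k t‖ ≤ 2 / k := by
  rw [phiZ, sub_add_cancel_left, norm_neg, norm_div, norm_natCast]
  gcongr
  exact norm_exp_I_mul_ofReal_sub_one_le_two t

lemma one_third_le_norm_phiZ {k : ℕ} (hk : 3 ≤ k) (t : ℝ) : 1 / 3 ≤ ‖phiZ k t‖ := by
  have hk' : (3 : ℝ) ≤ k := by exact_mod_cast hk
  have h2k : 2 / (k : ℝ) ≤ 2 / 3 := by gcongr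
  have := (norm_sub_norm_le (1 : ℂ) (phiZ k t)).trans (norm_one_sub_phiZ_le k t)
  rw [norm_one] at this
  linarith

lemma norm_logDeriv_phiZ_sub_exp_le {k : ℕ} (hk : 3 ≤ k) (t : ℝ) :
    ‖(k / I) * deriv (phiZ k) t / phiZ k t - exp (I * t)‖ ≤ 6 / k := by
  have hφ := one_third_le_norm_phiZ hk t
  have hφ0 : phiZ k t ≠ 0 := norm_pos_iff.mp (by linarith)
  have hk0 : (0 : ℝ) < k := by positivity
  have hsummand : (k / I) * deriv (phiZ k) t / phiZ k t - exp (I * t)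
      = exp (I * t) * (1 - phiZ k t) / phiZ k t := by
    rw [div_I_mul_deriv_phiZ (by omega)]
    field_simp
  rw [hsummand, norm_div, norm_mul, norm_exp_I_mul_ofReal, one_mul,
    div_le_iff₀ (by linarith)]
  calc ‖1 - phiZ k t‖ ≤ 2 / k := norm_one_sub_phiZ_le k t
    _ = 6 / k * (1 / 3) := by ring
    _ ≤ 6 / k * ‖phiZ k t‖ := by gcongr

lemma sum_Icc_inv_eq_harmonic_sub {m n : ℕ} (hmn : m ≤ n) :
    ∑ k ∈ Finset.Icc (m + 1) n, (k : ℝ)⁻¹ = harmonic n - harmonic m := by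
  induction n, hmn using Nat.le_induction with
  | base => simp
  | succ n hmn ih =>
    rw [Finset.sum_Icc_succ_top (by omega), ih, harmonic_succ]
    push_cast
    ring

lemma sum_Icc_inv_le_one_add_log {m n : ℕ} (hm : 0 < m) (hmn : m ≤ n) :
    ∑ k ∈ Finset.Icc (m + 1) n, (k : ℝ)⁻¹ ≤ 1 + Real.log ((n : ℝ) / m) := by
  have hm' : (0 : ℝ) < m := by exact_mod_cast hm
  have hn' : (0 : ℝ) < n := by exact_mod_cast hm.trans_le hmn
  have hlog_m : Real.log m ≤ harmonic m :=
    calc Real.log m ≤ Real.log (m + 1 : ℕ) := Real.log_le_log hm' (by push_cast; linarith)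
      _ ≤ harmonic m := log_add_one_le_harmonic m
  rw [sum_Icc_inv_eq_harmonic_sub hmn, Real.log_div hn'.ne' hm'.ne']
  linarith [harmonic_le_one_add_log n]

theorem gamma_mn_sup_bound :
    ∃ C : ℝ, 0 < C ∧ ∀ m n : ℕ, 2 ≤ m → m < n →
      ∀ u ∈ Set.Icc (-Real.pi) Real.pi,
        ‖(1 / ((n : ℂ) - m)) * ∑ k ∈ Finset.Icc (m + 1) n,
            (((k : ℂ) / Complex.I) * deriv (phiZ k) ((k : ℝ) * u) / phiZ k ((k : ℝ) * u)
              - Complex.exp (Complex.I * (u * k)))‖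
          ≤ C * (1 + Real.log ((n : ℝ) / m)) / ((n : ℝ) - m) := by
  refine ⟨6, by norm_num, fun m n hm hmn u _ => ?_⟩
  have hnm : (0 : ℝ) < n - m := sub_pos.mpr (by exact_mod_cast hmn)
  have hprefactor : ‖1 / ((n : ℂ) - m)‖ = 1 / ((n : ℝ) - m) := by
    rw [← ofReal_natCast, ← ofReal_natCast, ← ofReal_sub, ← ofReal_one, ← ofReal_div,
      norm_real, Real.norm_of_nonneg (by positivity)]
  have hsum : ‖∑ k ∈ Finset.Icc (m + 1) n,
      (((k : ℂ) / I) * deriv (phiZ k) ((k : ℝ) * u) / phiZ k ((k : ℝ) * u)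
        - exp (I * (u * k)))‖ ≤ ∑ k ∈ Finset.Icc (m + 1) n, 6 * (k : ℝ)⁻¹ := by
    refine (norm_sum_le _ _).trans (Finset.sum_le_sum fun k hk => ?_)
    have hk : 3 ≤ k := by rw [Finset.mem_Icc] at hk; omega
    have hexp : exp (I * (u * k)) = exp (I * ((k * u : ℝ) : ℂ)) := by push_cast; ring_nf
    rw [hexp, ← div_eq_mul_inv]
    exact norm_logDeriv_phiZ_sub_exp_le hk _
  rw [← Finset.mul_sum] at hsum
  rw [norm_mul, hprefactor]
  calc 1 / ((n : ℝ) - m) * _ ≤ 1 / ((n : ℝ) - m) * (6 * (1 + Real.log ((n : ℝ) / m))) := by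
        gcongr
        exact hsum.trans (by gcongr; exact sum_Icc_inv_le_one_add_log (by omega) hmn.le)
    _ = 6 * (1 + Real.log ((n : ℝ) / m)) / ((n : ℝ) - m) := by ring
end

section
/- For all real t and x, the function η_t(x) = (e^{itx} − 1)/x (extended by η_t(0) = it) satisfies |η′_t(x)| ≤ t²/2 for all x ∈ ℝ. -/
/-!
Write `η_t(y) = i t G(t y)` with `G(z) = ∫₀¹ e^{izs} ds`; for `y ≠ 0` this is the fundamental
theorem of calculus, and at `y = 0` both sides equal `i t`, so no case distinction survives.
Then `η_t'(x) = i t² G'(t x)`, and differentiating under the integral sign gives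
`|G'(z)| = |∫₀¹ i s e^{izs} ds| ≤ ∫₀¹ s ds = 1/2`.
-/

open Complex intervalIntegral
open MeasureTheory (ae_of_all)

lemma hasDerivAt_cexp_const_mul_ofReal (c : ℂ) (s : ℝ) :
    HasDerivAt (fun s : ℝ => exp (c * s)) (c * exp (c * s)) s := by
  simpa [mul_comm] using ((hasDerivAt_id (s : ℂ)).const_mul c).cexp.comp_ofReal

lemma integral_mul_cexp_const_mul (c : ℂ) :
    ∫ s in (0 : ℝ)..1, c * exp (c * s) = exp c - 1 := by
  rw [integral_eq_sub_of_hasDerivAt (fun s _ => hasDerivAt_cexp_const_mul_ofReal c s)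
    (by apply Continuous.intervalIntegrable; fun_prop)]
  simp

noncomputable def expAvg (z : ℝ) : ℂ := ∫ s in (0 : ℝ)..1, exp (I * z * s)

lemma eta_eq_mul_expAvg (t y : ℝ) :
    (if y = 0 then I * t else (exp (I * t * y) - 1) / y) = I * t * expAvg (t * y) := by
  rcases eq_or_ne y 0 with rfl | hy
  · simp [expAvg]
  · have hy' : (y : ℂ) ≠ 0 := by exact_mod_cast hy
    rw [if_neg hy, ← integral_mul_cexp_const_mul, expAvg, ← integral_const_mul,
      ← integral_div]
    congr 1
    ext s
    push_cast
    field_simp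

lemma norm_I_mul_mul_cexp (s z : ℝ) : ‖I * s * exp (I * z * s)‖ = |s| := by
  have h : I * z * s = ((z * s : ℝ) : ℂ) * I := by push_cast; ring
  rw [norm_mul, h, norm_exp_ofReal_mul_I]
  simp

lemma hasDerivAt_expAvg (z : ℝ) :
    HasDerivAt expAvg (∫ s in (0 : ℝ)..1, I * s * exp (I * z * s)) z := by
  have h_diff (s w : ℝ) :
      HasDerivAt (fun w : ℝ => exp (I * w * s)) (I * s * exp (I * w * s)) w := by
    simpa [mul_right_comm _ (s : ℂ)] using hasDerivAt_cexp_const_mul_ofReal (I * s) w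
  refine (hasDerivAt_integral_of_dominated_loc_of_deriv_le
    (F := fun (w s : ℝ) => exp (I * w * s)) (F' := fun (w s : ℝ) => I * s * exp (I * w * s))
    (bound := fun _ => 1) Filter.univ_mem (.of_forall fun w => ?_) ?_ ?_ ?_
    intervalIntegrable_const (ae_of_all _ fun s _ w _ => h_diff s w)).2
  · fun_prop
  · exact (by fun_prop : Continuous fun s : ℝ => exp (I * z * s)).intervalIntegrable 0 1
  · fun_prop
  · refine ae_of_all _ fun s hs w _ => ?_
    rw [Set.uIoc_of_le zero_le_one] at hs
    rw [norm_I_mul_mul_cexp, abs_of_pos hs.1]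
    exact hs.2

lemma norm_deriv_expAvg_le (z : ℝ) : ‖deriv expAvg z‖ ≤ 1 / 2 := by
  rw [(hasDerivAt_expAvg z).deriv]
  calc ‖∫ s in (0 : ℝ)..1, I * s * exp (I * z * s)‖ ≤ ∫ s in (0 : ℝ)..1, s :=
        norm_integral_le_of_norm_le zero_le_one
          (ae_of_all _ fun s hs => (norm_I_mul_mul_cexp s z).trans_le (abs_of_pos hs.1).le)
          (continuous_id.intervalIntegrable 0 1)
    _ = 1 / 2 := by norm_num [integral_id]

theorem eta_deriv_bound (t : ℝ) :
    ∀ x : ℝ,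
      ‖deriv (fun y : ℝ =>
          if y = 0 then Complex.I * t else (Complex.exp (Complex.I * t * y) - 1) / y) x‖
        ≤ t ^ 2 / 2 := by
  intro x
  have hd : HasDerivAt (fun y : ℝ => I * t * expAvg (t * y))
      (I * t * (t • deriv expAvg (t * x))) x :=
    ((hasDerivAt_expAvg (t * x)).differentiableAt.hasDerivAt.scomp x
      (hasDerivAt_const_mul t)).const_mul _
  rw [funext (eta_eq_mul_expAvg t), hd.deriv]
  calc ‖I * t * (t • deriv expAvg (t * x))‖ = t ^ 2 * ‖deriv expAvg (t * x)‖ := by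
        rw [norm_mul, norm_smul, norm_mul, norm_I, norm_real, one_mul, ← mul_assoc,
          Real.norm_eq_abs, abs_mul_abs_self, sq]
    _ ≤ t ^ 2 * (1 / 2) := by gcongr; exact norm_deriv_expAvg_le _
    _ = t ^ 2 / 2 := by ring
end

section
/- For every real u, the function δ(u) = 2(1 − u·sin u − cos u) + u² satisfies 0 ≤ δ(u) ≤ u⁴/4. -/
/-!
Writing `s = sin (u/2)`, `c = cos (u/2)`, one has `δ(u) = (2s - uc)² + (us)²`, which gives
`0 ≤ δ`. For the upper bound, `δ'(u) = 2u(1 - cos u) ≤ u³` for `u ≥ 0` (as `1 - cos u ≤ u²/2`), so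
`u⁴/4 - δ(u)` is monotone on `[0, ∞)` and vanishes at `0`; evenness of `δ` covers `u < 0`.
-/

open Real

noncomputable def delta (u : ℝ) : ℝ := 2 * (1 - u * sin u - cos u) + u ^ 2

lemma delta_neg (u : ℝ) : delta (-u) = delta u := by
  simp only [delta, sin_neg, cos_neg, mul_neg, neg_mul, neg_neg, even_two.neg_pow]

lemma delta_eq_sq_add_sq (u : ℝ) :
    delta u = (2 * sin (u / 2) - u * cos (u / 2)) ^ 2 + (u * sin (u / 2)) ^ 2 := by
  have hsin : sin u = 2 * sin (u / 2) * cos (u / 2) := by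
    rw [← sin_two_mul, mul_div_cancel₀ u two_ne_zero]
  have hcos : cos u = 1 - 2 * sin (u / 2) ^ 2 := by
    rw [← cos_two_mul_eq_one_sub, mul_div_cancel₀ u two_ne_zero]
  have hpyth := sin_sq_add_cos_sq (u / 2)
  rw [delta, hsin, hcos]
  linear_combination (-u ^ 2) * hpyth

lemma delta_nonneg (u : ℝ) : 0 ≤ delta u := by
  rw [delta_eq_sq_add_sq]
  positivity

lemma hasDerivAt_delta (u : ℝ) : HasDerivAt delta (2 * u * (1 - cos u)) u := by
  have h := ((((hasDerivAt_id u).fun_mul (hasDerivAt_sin u)).const_sub 1).fun_sub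
    (hasDerivAt_cos u)).const_mul 2 |>.fun_add (hasDerivAt_pow 2 u)
  refine h.congr_deriv ?_
  simp only [id, Nat.cast_ofNat]
  ring

lemma delta_le_of_nonneg {u : ℝ} (hu : 0 ≤ u) : delta u ≤ u ^ 4 / 4 := by
  let H : ℝ → ℝ := fun x => x ^ 4 / 4 - delta x
  have hH : ∀ x, HasDerivAt H (x ^ 3 - 2 * x * (1 - cos x)) x := fun x =>
    (((hasDerivAt_pow 4 x).div_const 4).fun_sub (hasDerivAt_delta x)).congr_deriv (by norm_num)
  have hmono : MonotoneOn H (Set.Ici 0) := by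
    refine monotoneOn_of_deriv_nonneg (convex_Ici 0)
      (fun x _ => (hH x).continuousAt.continuousWithinAt)
      (fun x _ => (hH x).differentiableAt.differentiableWithinAt) fun x hx => ?_
    rw [interior_Ici] at hx
    rw [(hH x).deriv]
    nlinarith [one_sub_sq_div_two_le_cos (x := x), le_of_lt (Set.mem_Ioi.mp hx)]
  have hH0u : H 0 ≤ H u := hmono Set.self_mem_Ici hu hu
  have hδ0 : delta 0 = 0 := by norm_num [delta]
  simp only [H, hδ0] at hH0u
  linarith

lemma delta_le (u : ℝ) : delta u ≤ u ^ 4 / 4 := by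
  rcases le_total 0 u with hu | hu
  · exact delta_le_of_nonneg hu
  · simpa [delta_neg, even_two.neg_pow, (by norm_num : Even 4).neg_pow] using
      delta_le_of_nonneg (neg_nonneg.mpr hu)

theorem delta_bounds (u : ℝ) :
    0 ≤ 2 * (1 - u * Real.sin u - Real.cos u) + u ^ 2 ∧
      2 * (1 - u * Real.sin u - Real.cos u) + u ^ 2 ≤ u ^ 4 / 4 :=
  ⟨delta_nonneg u, delta_le u⟩
end

section
/- There exist positive absolute constants δ and C such that the characteristic function φ(t) = exp(∫₀¹ (e^{itu}−1)/u du) of the Dickman distribution satisfies ∫_{−∞}^{∞} |φ(t)|² dt < ∞; moreover |φ(t)|² = exp(−2∫₀¹ (1−cos tu)/u du) and for t ≥ δ one has |φ(t)|² ≤ C/t². -/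
/-!
Writing `D t = ∫₀¹ (1 - cos tu)/u du`, one has `|φ(t)|² = exp (-2 D t)`, and the
substitution `z = |t| u` gives `D t = ∫₀^{|t|} (1 - cos z)/z dz ≥ 0`. For `|t| ≥ 1`,
dropping `∫₀¹` and integrating `∫₁^{|t|} cos z / z dz` by parts gives
`D t ≥ log |t| - 3`, hence `|φ(t)|² ≤ e⁶ / t²`; together with `|φ(t)| ≤ 1` this
dominates `|φ|²` by `2 e⁶ / (1 + t²)`.
-/

open MeasureTheory Real

noncomputable def dickmanCharFun (t : ℝ) : ℂ :=
  Complex.exp (∫ u in (0:ℝ)..1, (Complex.exp (Complex.I * t * u) - 1) / u)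

noncomputable def dickmanExponent (t : ℝ) : ℝ :=
  ∫ u in (0:ℝ)..1, (1 - cos (t * u)) / u

lemma norm_exp_I_mul_sub_one_div_le (t u : ℝ) :
    ‖(Complex.exp (Complex.I * t * u) - 1) / u‖ ≤ |t| := by
  rcases eq_or_ne u 0 with rfl | hu
  · simp
  rw [norm_div, mul_assoc, ← Complex.ofReal_mul, div_le_iff₀ (by simpa using hu)]
  simpa [abs_mul] using norm_exp_I_mul_ofReal_sub_one_le (x := t * u)

lemma intervalIntegrable_exp_I_mul_sub_one_div (t a b : ℝ) :
    IntervalIntegrable (fun u : ℝ => (Complex.exp (Complex.I * t * u) - 1) / u) volume a b :=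
  intervalIntegrable_const.mono_fun' (by fun_prop : Measurable _).aestronglyMeasurable
    (ae_of_all _ (norm_exp_I_mul_sub_one_div_le t))

lemma re_exp_I_mul_sub_one_div (t u : ℝ) :
    ((Complex.exp (Complex.I * t * u) - 1) / u).re = -((1 - cos (t * u)) / u) := by
  rw [Complex.div_ofReal_re, mul_assoc, ← Complex.ofReal_mul, mul_comm,
    Complex.sub_re, Complex.exp_ofReal_mul_I_re, Complex.one_re]
  ring

lemma norm_dickmanCharFun_sq (t : ℝ) :
    ‖dickmanCharFun t‖ ^ 2 = exp (-2 * dickmanExponent t) := by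
  rw [dickmanCharFun, Complex.norm_exp, ← exp_nat_mul, ← RCLike.re_to_complex,
    ← intervalIntegral.intervalIntegral_re (intervalIntegrable_exp_I_mul_sub_one_div t 0 1)]
  simp only [RCLike.re_to_complex, re_exp_I_mul_sub_one_div, intervalIntegral.integral_neg,
    dickmanExponent]
  push_cast
  ring_nf

lemma one_sub_cos_div_nonneg {z : ℝ} (hz : 0 ≤ z) : 0 ≤ (1 - cos z) / z :=
  div_nonneg (sub_nonneg.2 (cos_le_one z)) hz

lemma abs_one_sub_cos_div_le (z : ℝ) : |(1 - cos z) / z| ≤ |z| / 2 := by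
  rcases eq_or_ne z 0 with rfl | hz
  · simp
  have h := one_sub_sq_div_two_le_cos (x := z)
  rw [abs_div, abs_of_nonneg (sub_nonneg.2 (cos_le_one z)), div_le_iff₀ (abs_pos.2 hz)]
  nlinarith [sq_abs z]

lemma intervalIntegrable_one_sub_cos_div (a b : ℝ) :
    IntervalIntegrable (fun z => (1 - cos z) / z) volume a b :=
  ((continuous_abs.div_const 2).intervalIntegrable a b).mono_fun'
    (by fun_prop : Measurable _).aestronglyMeasurable (ae_of_all _ abs_one_sub_cos_div_le)

lemma dickmanExponent_eq_integral_abs (t : ℝ) :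
    dickmanExponent t = ∫ z in (0:ℝ)..|t|, (1 - cos z) / z := by
  rcases eq_or_ne t 0 with rfl | ht
  · simp [dickmanExponent]
  have hcos : ∀ u, cos (t * u) = cos (|t| * u) := fun u => by
    rcases abs_choice t with h | h <;> simp [h]
  calc dickmanExponent t = ∫ u in (0:ℝ)..1, |t| * ((1 - cos (|t| * u)) / (|t| * u)) := by
        refine intervalIntegral.integral_congr fun u _ => ?_
        rw [hcos, ← mul_div_assoc, mul_div_mul_left _ _ (abs_ne_zero.2 ht)]
    _ = _ := by
        rw [intervalIntegral.integral_const_mul,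
          intervalIntegral.integral_comp_mul_left (fun z => (1 - cos z) / z) (abs_ne_zero.2 ht)]
        simp [ht]

lemma continuous_dickmanExponent : Continuous dickmanExponent := by
  simp only [funext dickmanExponent_eq_integral_abs]
  exact (intervalIntegral.continuous_primitive intervalIntegrable_one_sub_cos_div 0).comp
    continuous_abs

lemma dickmanExponent_nonneg (t : ℝ) : 0 ≤ dickmanExponent t := by
  rw [dickmanExponent_eq_integral_abs]
  exact intervalIntegral.integral_nonneg (abs_nonneg t) fun z hz => one_sub_cos_div_nonneg hz.1

lemma integral_inv_sq {a b : ℝ} (ha : 0 < a) (hab : a ≤ b) :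
    ∫ z in a..b, (z ^ 2)⁻¹ = a⁻¹ - b⁻¹ := by
  have hne : ∀ z ∈ Set.uIcc a b, z ≠ 0 := fun z hz => by
    rw [Set.uIcc_of_le hab] at hz; exact (ha.trans_le hz.1).ne'
  rw [intervalIntegral.integral_eq_sub_of_hasDerivAt (f := fun z => -z⁻¹)
    (f' := fun z => (z ^ 2)⁻¹) (fun z hz => by simpa using (hasDerivAt_inv (hne z hz)).fun_neg)
    (ContinuousOn.inv₀ (by fun_prop) fun z hz => pow_ne_zero 2 (hne z hz)).intervalIntegrable]
  ring

lemma abs_integral_inv_mul_cos_le {T : ℝ} (hT : 1 ≤ T) :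
    |∫ z in (1:ℝ)..T, z⁻¹ * cos z| ≤ 3 := by
  have hpos : ∀ z ∈ Set.uIcc (1:ℝ) T, 0 < z := fun z hz => by
    rw [Set.uIcc_of_le hT] at hz; linarith [hz.1]
  have hinvsq : IntervalIntegrable (fun z : ℝ => (z ^ 2)⁻¹) volume 1 T :=
    (ContinuousOn.inv₀ (by fun_prop) fun z hz => (pow_pos (hpos z hz) 2).ne').intervalIntegrable
  rw [intervalIntegral.integral_mul_deriv_eq_deriv_mul (u := fun z : ℝ => z⁻¹) (v := sin)
    (fun z hz => hasDerivAt_inv (hpos z hz).ne') (fun z _ => hasDerivAt_sin z)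
    hinvsq.neg (continuous_cos.intervalIntegrable 1 T)]
  have hsin_tail : |∫ z in (1:ℝ)..T, -(z ^ 2)⁻¹ * sin z| ≤ 1 := by
    rw [← Real.norm_eq_abs]
    refine (intervalIntegral.norm_integral_le_of_norm_le hT (ae_of_all _ fun z _ => ?_)
      hinvsq).trans ?_
    · rw [norm_mul, norm_neg, norm_inv, norm_pow, Real.norm_eq_abs, sq_abs]
      exact mul_le_of_le_one_right (by positivity) (abs_sin_le_one z)
    · rw [integral_inv_sq one_pos hT]
      linarith [inv_pos.2 (one_pos.trans_le hT)]
  have hsin_T : |T⁻¹ * sin T| ≤ 1 := by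
    rw [abs_mul, abs_inv, abs_of_pos (by linarith)]
    exact mul_le_one₀ (inv_le_one_of_one_le₀ hT) (abs_nonneg _) (abs_sin_le_one T)
  have hsin_one := abs_le.1 (abs_sin_le_one 1)
  rw [inv_one, one_mul, abs_le]
  constructor <;> linarith [abs_le.1 hsin_T, abs_le.1 hsin_tail]

lemma log_abs_sub_three_le_dickmanExponent {t : ℝ} (ht : 1 ≤ |t|) :
    log |t| - 3 ≤ dickmanExponent t := by
  have hinv : IntervalIntegrable (fun z : ℝ => z⁻¹) volume 1 |t| :=
    (continuousOn_inv₀.mono fun z hz => by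
      rw [Set.uIcc_of_le ht] at hz; exact (one_pos.trans_le hz.1).ne').intervalIntegrable
  have htail :
      ∫ z in (1:ℝ)..|t|, (1 - cos z) / z = log |t| - ∫ z in (1:ℝ)..|t|, z⁻¹ * cos z := by
    rw [intervalIntegral.integral_congr (g := fun z => z⁻¹ - z⁻¹ * cos z) fun z _ => by ring,
      intervalIntegral.integral_sub hinv (hinv.mul_continuousOn continuous_cos.continuousOn),
      integral_inv_of_pos one_pos (one_pos.trans_le ht), div_one]
  have hhead : 0 ≤ ∫ z in (0:ℝ)..1, (1 - cos z) / z :=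
    intervalIntegral.integral_nonneg zero_le_one fun z hz => one_sub_cos_div_nonneg hz.1
  rw [dickmanExponent_eq_integral_abs, ← intervalIntegral.integral_add_adjacent_intervals
    (intervalIntegrable_one_sub_cos_div 0 1) (intervalIntegrable_one_sub_cos_div 1 |t|), htail]
  linarith [abs_le.1 (abs_integral_inv_mul_cos_le ht)]

lemma exp_neg_two_mul_dickmanExponent_le {t : ℝ} (ht : 1 ≤ |t|) :
    exp (-2 * dickmanExponent t) ≤ exp 6 / t ^ 2 := by
  calc exp (-2 * dickmanExponent t) ≤ exp (6 - 2 * log |t|) :=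
        exp_le_exp.2 (by linarith [log_abs_sub_three_le_dickmanExponent ht])
    _ = exp 6 / t ^ 2 := by
        rw [exp_sub, ← sq_abs t, ← exp_log (pow_pos (one_pos.trans_le ht) 2), log_pow]
        norm_num

lemma exp_neg_two_mul_dickmanExponent_le_inv_one_add_sq (t : ℝ) :
    exp (-2 * dickmanExponent t) ≤ 2 * exp 6 * (1 + t ^ 2)⁻¹ := by
  have hexp : exp (-2 * dickmanExponent t) ≤ 1 :=
    exp_le_one_iff.2 (by linarith [dickmanExponent_nonneg t])
  have hexp6 : 1 ≤ exp 6 := one_le_exp (by norm_num)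
  rw [← div_eq_mul_inv, le_div_iff₀ (by positivity)]
  rcases le_total |t| 1 with ht | ht
  · have hsq : t ^ 2 ≤ 1 := by nlinarith [sq_abs t, abs_nonneg t]
    nlinarith [exp_pos (-2 * dickmanExponent t)]
  · have h := exp_neg_two_mul_dickmanExponent_le ht
    rw [le_div_iff₀ (by nlinarith [sq_abs t])] at h
    linarith

lemma integrable_exp_neg_two_mul_dickmanExponent :
    Integrable fun t => exp (-2 * dickmanExponent t) :=
  (integrable_inv_one_add_sq.const_mul (2 * exp 6)).mono'
    (continuous_dickmanExponent.const_mul (-2)).rexp.aestronglyMeasurable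
    (ae_of_all _ fun t => by
      rw [norm_of_nonneg (exp_pos _).le]
      exact exp_neg_two_mul_dickmanExponent_le_inv_one_add_sq t)

theorem dickman_char_sq_integrable :
    ∃ δ C : ℝ, 0 < δ ∧ 0 < C ∧
      (Integrable (fun t : ℝ =>
        ‖(Complex.exp
          (∫ u in (0:ℝ)..1, (Complex.exp (Complex.I * t * u) - 1) / u))‖ ^ 2)) ∧
      (∀ t : ℝ,
        ‖(Complex.exp
            (∫ u in (0:ℝ)..1, (Complex.exp (Complex.I * t * u) - 1) / u))‖ ^ 2
          = Real.exp (-2 * ∫ u in (0:ℝ)..1, (1 - Real.cos (t * u)) / u)) ∧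
      (∀ t : ℝ, δ ≤ t →
        ‖(Complex.exp
            (∫ u in (0:ℝ)..1, (Complex.exp (Complex.I * t * u) - 1) / u))‖ ^ 2
          ≤ C / t ^ 2) := by
  refine ⟨1, exp 6, one_pos, exp_pos 6, ?_, norm_dickmanCharFun_sq, fun t ht => ?_⟩
  · exact integrable_exp_neg_two_mul_dickmanExponent.congr
      (ae_of_all _ fun t => (norm_dickmanCharFun_sq t).symm)
  · exact (norm_dickmanCharFun_sq t).trans_le
      (exp_neg_two_mul_dickmanExponent_le (ht.trans (le_abs_self t)))
end

section
/- Let (V_n) be a sequence of centered square-integrable random variables such that for some β > 0 and constant C and for all integers m ≥ 0, n ≥ 1, E[(Σ_{i=m+1}^{m+n} V_i)²] ≤ C((m+n)^β − m^β). Then for every δ > 0, Σ_{i=1}^n V_i = O(n^{β/2}(log n)^{2+δ}) almost surely. -/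
/-!
Dyadic chaining for the partial sums `S n = V 1 + ⋯ + V n`. Every `n ≤ 2 ^ k` is reached from `0`
using at most one dyadic block `(j 2^l, (j+1) 2^l]` per level `l ≤ k`, so `|S n| ≤ (k + 1) t_k`
unless some dyadic block inside `[0, 2^k]` has a sum of size at least `t_k`. By Chebyshev's
inequality, and because the second-moment bound telescopes along each level, that happens with
probability at most `(k + 1) C 2^{kβ} / t_k²`. For `t_k = 2^{kβ/2} (k+1)^{1+δ}` this is
`C (k+1)^{-1-2δ}`, which is summable, so by Borel–Cantelli almost surely the chaining bound holds
for all large `k`; taking `k = ⌊log₂ n⌋ + 1` gives `(k + 1) t_k = O(n^{β/2} (log n)^{2+δ})`.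
-/

open MeasureTheory Filter Asymptotics Finset

theorem dist_le_of_dyadic_increments {E : Type*} [PseudoMetricSpace E] {t : ℝ} {k : ℕ} {g : ℕ → E}
    (hg : ∀ l ≤ k, ∀ j < 2 ^ (k - l), dist (g ((j + 1) * 2 ^ l)) (g (j * 2 ^ l)) ≤ t) :
    ∀ n ≤ 2 ^ k, dist (g n) (g 0) ≤ (k + 1) * t := by
  have ht : 0 ≤ t := dist_nonneg.trans (hg 0 (Nat.zero_le k) 0 (Nat.two_pow_pos _))
  induction k generalizing g with
  | zero =>
    intro n hn
    interval_cases n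
    · simpa using ht
    · simpa using hg 0 le_rfl 0 one_pos
  | succ k ih =>
    intro n hn
    push_cast
    by_cases hnk : n ≤ 2 ^ k
    · have := ih (fun l hl j hj => hg l (hl.trans k.le_succ) j
        (hj.trans_le (Nat.pow_le_pow_right two_pos (by omega)))) n hnk
      linarith
    -- past the midpoint: chain the right half from `2 ^ k`, then add the top-level block
    have hright : dist (g n) (g (2 ^ k)) ≤ (k + 1) * t := by
      have hshift := ih (g := fun i => g (2 ^ k + i)) (fun l hl j hj => ?_) (n - 2 ^ k) (by omega)
      · simpa [show 2 ^ k + (n - 2 ^ k) = n by omega] using hshift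
      have hblock := hg l (hl.trans k.le_succ) (2 ^ (k - l) + j)
        (by rw [show k + 1 - l = k - l + 1 by omega, pow_succ]; omega)
      have hpow := Nat.pow_sub_mul_pow 2 hl
      simpa only [add_mul, add_assoc, hpow] using hblock
    have hleft : dist (g (2 ^ k)) (g 0) ≤ t := by simpa using hg k k.le_succ 0 (by simp)
    linarith [dist_triangle (g n) (g (2 ^ k)) (g 0)]

theorem sum_range_dyadic_sub {G : Type*} [AddCommGroup G] (F : ℕ → G) {k l : ℕ} (hl : l ≤ k) :
    ∑ j ∈ range (2 ^ (k - l)), (F ((j + 1) * 2 ^ l) - F (j * 2 ^ l)) = F (2 ^ k) - F 0 := by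
  rw [sum_range_sub (fun j => F (j * 2 ^ l)), Nat.pow_sub_mul_pow 2 hl, zero_mul]

theorem measure_biUnion_dyadic_le {Ω : Type*} [MeasurableSpace Ω] {μ : Measure Ω}
    {A : ℕ → ℕ → Set Ω} {F : ℕ → ℝ} (hF : Monotone F)
    (hA : ∀ a b, a ≤ b → μ (A a b) ≤ ENNReal.ofReal (F b - F a)) (k : ℕ) :
    μ (⋃ l ∈ range (k + 1), ⋃ j ∈ range (2 ^ (k - l)), A (j * 2 ^ l) ((j + 1) * 2 ^ l))
      ≤ ENNReal.ofReal ((k + 1) * (F (2 ^ k) - F 0)) := by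
  have hmono : ∀ l j : ℕ, j * 2 ^ l ≤ (j + 1) * 2 ^ l := fun l j => by gcongr; omega
  calc _ ≤ ∑ l ∈ range (k + 1), ∑ j ∈ range (2 ^ (k - l)), μ (A (j * 2 ^ l) ((j + 1) * 2 ^ l)) :=
        (measure_biUnion_finset_le _ _).trans (sum_le_sum fun l _ => measure_biUnion_finset_le _ _)
    _ ≤ ∑ l ∈ range (k + 1), ∑ j ∈ range (2 ^ (k - l)),
          ENNReal.ofReal (F ((j + 1) * 2 ^ l) - F (j * 2 ^ l)) :=
        sum_le_sum fun l _ => sum_le_sum fun j _ => hA _ _ (hmono l j)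
    _ = ∑ _l ∈ range (k + 1), ENNReal.ofReal (F (2 ^ k) - F 0) := by
        refine sum_congr rfl fun l hl => ?_
        rw [← ENNReal.ofReal_sum_of_nonneg fun j _ => sub_nonneg.2 (hF (hmono l j)),
          sum_range_dyadic_sub F (Nat.lt_succ_iff.1 (mem_range.1 hl))]
    _ = ENNReal.ofReal ((k + 1) * (F (2 ^ k) - F 0)) := by
        rw [sum_const, card_range, nsmul_eq_mul, ENNReal.ofReal_mul (by positivity)]
        norm_cast

theorem measure_le_abs_le_integral_sq_div {Ω : Type*} [MeasurableSpace Ω] {μ : Measure Ω}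
    {X : Ω → ℝ} (hX : MemLp X 2 μ) {t : ℝ} (ht : 0 < t) :
    μ {ω | t ≤ |X ω|} ≤ ENNReal.ofReal ((∫ ω, X ω ^ 2 ∂μ) / t ^ 2) := by
  have hset : {ω | t ≤ |X ω|} = {ω | ENNReal.ofReal (t ^ 2) ≤ ENNReal.ofReal (X ω ^ 2)} := by
    ext ω
    simp only [Set.mem_ofPred_eq, ENNReal.ofReal_le_ofReal_iff (sq_nonneg _), sq_le_sq,
      abs_of_pos ht]
  rw [hset, ENNReal.ofReal_div_of_pos (by positivity),
    ofReal_integral_eq_lintegral_ofReal hX.integrable_sq (ae_of_all _ fun ω => sq_nonneg _)]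
  exact meas_ge_le_lintegral_div (hX.integrable_sq.aemeasurable.ennreal_ofReal)
    (by simp [ht.ne']) ENNReal.ofReal_ne_top

theorem ae_eventually_abs_sub_le_of_integral_sq_sub_le {Ω : Type*} [MeasurableSpace Ω]
    {μ : Measure Ω} {S : ℕ → Ω → ℝ} (hS : ∀ n, MemLp (S n) 2 μ) {F : ℕ → ℝ} (hF : Monotone F)
    (hSF : ∀ a b, a ≤ b → ∫ ω, (S b ω - S a ω) ^ 2 ∂μ ≤ F b - F a) {t : ℕ → ℝ}
    (ht : ∀ k, 0 < t k) (hsum : Summable fun k : ℕ => (k + 1) * (F (2 ^ k) - F 0) / t k ^ 2) :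
    ∀ᵐ ω ∂μ, ∀ᶠ k in atTop, ∀ n ≤ 2 ^ k, |S n ω - S 0 ω| ≤ (k + 1) * t k := by
  set bad : ℕ → Set Ω := fun k => ⋃ l ∈ range (k + 1), ⋃ j ∈ range (2 ^ (k - l)),
    {ω | t k ≤ |S ((j + 1) * 2 ^ l) ω - S (j * 2 ^ l) ω|}
  have hbad : ∀ k, μ (bad k) ≤ ENNReal.ofReal ((k + 1) * (F (2 ^ k) - F 0) / t k ^ 2) := by
    intro k
    have htk : 0 < t k ^ 2 := by have := ht k; positivity
    have hblock : ∀ a b, a ≤ b → μ {ω | t k ≤ |S b ω - S a ω|}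
        ≤ ENNReal.ofReal (F b / t k ^ 2 - F a / t k ^ 2) := fun a b hab => by
      refine (measure_le_abs_le_integral_sq_div ((hS b).sub (hS a)) (ht k)).trans ?_
      rw [← sub_div]
      exact ENNReal.ofReal_le_ofReal (div_le_div_of_nonneg_right (hSF a b hab) htk.le)
    convert measure_biUnion_dyadic_le (hF.div_const htk.le) hblock k using 2
    ring
  have hfinite : ∑' k, μ (bad k) ≠ ⊤ :=
    ne_top_of_le_ne_top hsum.tsum_ofReal_ne_top (ENNReal.tsum_le_tsum hbad)
  filter_upwards [ae_eventually_notMem hfinite] with ω hω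
  filter_upwards [hω] with k hk
  simp only [← Real.dist_eq]
  refine dist_le_of_dyadic_increments fun l hl j hj => ?_
  by_contra! hlarge
  exact hk (Set.mem_biUnion (mem_range.2 (Nat.lt_succ_of_le hl))
    (Set.mem_biUnion (mem_range.2 hj) (by simpa [Real.dist_eq] using hlarge.le)))

theorem isBigO_of_eventually_forall_le_two_pow {f B : ℕ → ℝ}
    (h : ∀ᶠ k in atTop, ∀ n ≤ 2 ^ k, |f n| ≤ B k) :
    f =O[atTop] fun n => B (Nat.log 2 n + 1) := by
  obtain ⟨K, hK⟩ := eventually_atTop.1 h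
  refine IsBigO.of_bound 1 (eventually_atTop.2 ⟨2 ^ K, fun n hn => ?_⟩)
  have hlog : K ≤ Nat.log 2 n + 1 := (Nat.le_log_of_pow_le one_lt_two hn).trans (Nat.le_succ _)
  rw [one_mul, Real.norm_eq_abs, Real.norm_eq_abs]
  exact (hK _ hlog n (Nat.lt_pow_succ_log_self one_lt_two n).le).trans (le_abs_self _)

theorem isBigO_two_pow_natLog_succ :
    (fun n : ℕ => (2 : ℝ) ^ (Nat.log 2 n + 1)) =O[atTop] fun n => (n : ℝ) := by
  refine IsBigO.of_bound 2 ((eventually_ne_atTop 0).mono fun n hn => ?_)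
  rw [Real.norm_of_nonneg (by positivity), Real.norm_natCast, pow_succ, mul_comm]
  gcongr
  exact_mod_cast Nat.pow_log_le_self 2 hn

theorem isBigO_natLog_add_two_log :
    (fun n : ℕ => (Nat.log 2 n : ℝ) + 2) =O[atTop] fun n => Real.log n := by
  have hlog2 : 0 < Real.log 2 := Real.log_pos one_lt_two
  refine IsBigO.of_bound ((Real.log 2)⁻¹ + 2) ((eventually_ge_atTop 3).mono fun n hn => ?_)
  have hlog : 1 ≤ Real.log n := by
    rw [Real.le_log_iff_exp_le (by positivity)]
    have h3 : (3 : ℝ) ≤ n := by exact_mod_cast hn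
    linarith [Real.exp_one_lt_d9]
  have hnat : (Nat.log 2 n : ℝ) ≤ (Real.log 2)⁻¹ * Real.log n := by
    simpa [Real.logb, div_eq_inv_mul] using Real.natLog_le_logb n 2
  rw [Real.norm_of_nonneg (by positivity), Real.norm_of_nonneg (by positivity)]
  linarith

theorem isBigO_two_pow_natLog_succ_rpow_mul {r s : ℝ} (hr : 0 ≤ r) (hs : 0 ≤ s) :
    (fun n : ℕ => ((2 : ℝ) ^ (Nat.log 2 n + 1)) ^ r * ((Nat.log 2 n : ℝ) + 2) ^ s)
      =O[atTop] fun n => (n : ℝ) ^ r * Real.log n ^ s := by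
  have hlog_nonneg : ∀ᶠ n : ℕ in atTop, 0 ≤ Real.log n :=
    Eventually.of_forall fun n => Real.log_natCast_nonneg n
  exact (isBigO_two_pow_natLog_succ.rpow hr (Eventually.of_forall fun n => n.cast_nonneg)).mul
    (isBigO_natLog_add_two_log.rpow hs hlog_nonneg)

theorem summable_mul_two_pow_rpow_div_sq (C : ℝ) {β δ : ℝ} (hδ : 0 < δ) :
    Summable fun k : ℕ => (k + 1) * (C * ((2 : ℝ) ^ k) ^ β) /
      (((2 : ℝ) ^ k) ^ (β / 2) * ((k : ℝ) + 1) ^ (1 + δ)) ^ 2 := by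
  have hp : Summable fun k : ℕ => (((k + 1 : ℕ) : ℝ) ^ (1 + 2 * δ))⁻¹ :=
    (summable_nat_add_iff 1).2 (Real.summable_nat_rpow_inv.2 (by linarith))
  refine (hp.mul_left C).congr fun k => ?_
  have h2k : (0 : ℝ) < 2 ^ k := by positivity
  have hk : (0 : ℝ) < k + 1 := by positivity
  rw [mul_pow, ← Real.rpow_mul_natCast h2k.le, ← Real.rpow_mul_natCast hk.le,
    show β / 2 * ((2 : ℕ) : ℝ) = β by push_cast; ring,
    show (1 + δ) * ((2 : ℕ) : ℝ) = 1 + (1 + 2 * δ) by push_cast; ring,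
    Real.rpow_one_add' hk.le (by linarith)]
  have : ((2 : ℝ) ^ k) ^ β ≠ 0 := (Real.rpow_pos_of_pos h2k β).ne'
  have : ((k : ℝ) + 1) ^ (1 + 2 * δ) ≠ 0 := (Real.rpow_pos_of_pos hk _).ne'
  push_cast
  field_simp

theorem sum_Icc_one_sub_sum_Icc_one {M : Type*} [AddCommGroup M] (f : ℕ → M) {a b : ℕ}
    (hab : a ≤ b) : ∑ i ∈ Icc 1 b, f i - ∑ i ∈ Icc 1 a, f i = ∑ i ∈ Icc (a + 1) b, f i := by
  rw [sub_eq_iff_eq_add', Icc_add_one_left_eq_Ioc, ← zero_add 1, Icc_add_one_left_eq_Ioc,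
    Icc_add_one_left_eq_Ioc, sum_Ioc_consecutive f a.zero_le hab]

theorem gaal_koksma_general {Ω : Type*} [MeasurableSpace Ω] (μ : Measure Ω)
    (V : ℕ → Ω → ℝ)
    (hL2 : ∀ n, MemLp (V n) 2 μ)
    (β C : ℝ) (hβ : 0 < β)
    (hbound : ∀ m n : ℕ, 1 ≤ n →
      ∫ ω, (∑ i ∈ Finset.Icc (m + 1) (m + n), V i ω) ^ 2 ∂μ
        ≤ C * (((m + n : ℕ) : ℝ) ^ β - (m : ℝ) ^ β)) :
    ∀ δ : ℝ, 0 < δ → ∀ᵐ ω ∂μ,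
      (fun n : ℕ => ∑ i ∈ Finset.Icc 1 n, V i ω) =O[atTop]
        (fun n : ℕ => (n : ℝ) ^ (β / 2) * Real.log n ^ (2 + δ)) := by
  intro δ hδ
  set S : ℕ → Ω → ℝ := fun n ω => ∑ i ∈ Icc 1 n, V i ω
  have hC : 0 ≤ C := by
    simpa [Real.zero_rpow hβ.ne'] using
      (integral_nonneg fun ω => sq_nonneg _).trans (hbound 0 1 le_rfl)
  have hSF : ∀ a b, a ≤ b → ∫ ω, (S b ω - S a ω) ^ 2 ∂μ ≤ C * (b : ℝ) ^ β - C * (a : ℝ) ^ β := by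
    intro a b hab
    obtain rfl | hlt := hab.eq_or_lt
    · simp
    simpa [S, sum_Icc_one_sub_sum_Icc_one _ hab, mul_sub, Nat.add_sub_cancel' hab]
      using hbound a (b - a) (by omega)
  have hF : Monotone fun m : ℕ => C * (m : ℝ) ^ β := fun a b hab => by
    dsimp only; gcongr
  have hchain := ae_eventually_abs_sub_le_of_integral_sq_sub_le
    (S := S) (fun n => memLp_finsetSum _ fun i _ => hL2 i) hF hSF
    (t := fun k => ((2 : ℝ) ^ k) ^ (β / 2) * ((k : ℝ) + 1) ^ (1 + δ)) (fun k => by positivity)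
    (by simpa [Real.zero_rpow hβ.ne'] using summable_mul_two_pow_rpow_div_sq C hδ)
  filter_upwards [hchain] with ω hω
  have hgrowth : ∀ᶠ k : ℕ in atTop, ∀ n ≤ 2 ^ k,
      |S n ω| ≤ ((2 : ℝ) ^ k) ^ (β / 2) * ((k : ℝ) + 1) ^ (2 + δ) := by
    filter_upwards [hω] with k hk n hn
    rw [show 2 + δ = 1 + (1 + δ) by ring, Real.rpow_one_add' (by positivity) (by positivity)]
    simpa [S, mul_left_comm] using hk n hn
  refine (isBigO_of_eventually_forall_le_two_pow hgrowth).trans ?_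
  refine (isBigO_two_pow_natLog_succ_rpow_mul (by positivity) (by positivity)).congr_left
    fun n => ?_
  push_cast
  ring_nf

theorem gaal_koksma {Ω : Type*} [MeasurableSpace Ω] (μ : Measure Ω)
    [IsProbabilityMeasure μ] (V : ℕ → Ω → ℝ)
    (hL2 : ∀ n, MemLp (V n) 2 μ)
    (hcent : ∀ n, ∫ ω, V n ω ∂μ = 0)
    (β C : ℝ) (hβ : 0 < β)
    (hbound : ∀ m n : ℕ, 1 ≤ n →
      ∫ ω, (∑ i ∈ Finset.Icc (m + 1) (m + n), V i ω) ^ 2 ∂μ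
        ≤ C * (((m + n : ℕ) : ℝ) ^ β - (m : ℝ) ^ β)) :
    ∀ δ : ℝ, 0 < δ → ∀ᵐ ω ∂μ,
      (fun n : ℕ => ∑ i ∈ Finset.Icc 1 n, V i ω) =O[atTop]
        (fun n : ℕ => (n : ℝ) ^ (β / 2) * Real.log n ^ (2 + δ)) :=
  gaal_koksma_general μ V hL2 β C hβ hbound
end

section
/- For every n ≥ 2 and x ∈ (0,1), the n-th cumulant of the Bernoulli B(1,x) law equals c_n(x) = x(1−x) Σ_{k=1}^{n−1} a_{k,n−1} x^{k−1}, where a_{k,n} = Σ_{j=0}^{k} (−1)^{j+1} binom(k,j) j^n. -/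
/-- `a_{k,n} = Σ_{j=0}^{k} (−1)^{j+1} C(k,j) j^n`. -/
noncomputable def aCoef (k n : ℕ) : ℝ :=
  ∑ j ∈ Finset.range (k + 1), (-1 : ℝ) ^ (j + 1) * (Nat.choose k j : ℝ) * (j : ℝ) ^ n

/-!
The recursion is solved by `c_n(x) = Σ_{k=1}^n a_{k,n} x^k / k`. Indeed, from
`j C(k+1,j) = (k+1) (C(k+1,j) - C(k,j))` the coefficients satisfy
`a_{k+1,n+1} = (k+1) (a_{k+1,n} - a_{k,n})`, and `a_{0,n} = 0` for `n ≥ 1`, `a_{k,n} = 0` for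
`k > n`; so `Σ_k a_{k,n+1} x^k / k = Σ_k a_{k,n} (x^k - x^{k+1}) = x (1 - x) Σ_k a_{k,n} x^{k-1}`.
Differentiating `c_{n-1}` once more gives the stated formula.
-/

open Finset

theorem natCast_mul_choose_succ (k j : ℕ) :
    (j * (k + 1).choose j : ℝ) = (k + 1) * ((k + 1).choose j - k.choose j) := by
  have h := Nat.choose_mul_succ_eq k j
  rcases le_or_gt j (k + 1) with hj | hj
  · rw [← Nat.cast_inj (R := ℝ)] at h
    push_cast [hj] at h
    linear_combination h
  · simp [Nat.choose_eq_zero_of_lt hj, Nat.choose_eq_zero_of_lt (by omega : k < j)]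

theorem aCoef_succ_succ (k n : ℕ) :
    aCoef (k + 1) (n + 1) = (k + 1) * (aCoef (k + 1) n - aCoef k n) := by
  have hk : aCoef k n =
      ∑ j ∈ range (k + 2), (-1 : ℝ) ^ (j + 1) * (k.choose j : ℝ) * (j : ℝ) ^ n := by
    rw [aCoef, sum_range_succ _ (k + 1), Nat.choose_succ_self]
    simp
  rw [hk, aCoef, aCoef, ← sum_sub_distrib, mul_sum]
  refine sum_congr rfl fun j _ => ?_
  linear_combination (-1 : ℝ) ^ (j + 1) * (j : ℝ) ^ n * natCast_mul_choose_succ k j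

theorem aCoef_zero_left {n : ℕ} (hn : n ≠ 0) : aCoef 0 n = 0 := by
  simp [aCoef, hn]

theorem aCoef_zero_right {k : ℕ} (hk : k ≠ 0) : aCoef k 0 = 0 := by
  have h := Int.alternating_sum_range_choose_of_ne hk
  simp only [aCoef, pow_zero, mul_one, pow_succ, mul_neg_one, neg_mul, sum_neg_distrib,
    neg_eq_zero]
  exact_mod_cast h

theorem aCoef_eq_zero_of_lt {k n : ℕ} (h : n < k) : aCoef k n = 0 := by
  induction n generalizing k with
  | zero => exact aCoef_zero_right (by omega)
  | succ n ih =>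
    obtain ⟨k, rfl⟩ : ∃ m, k = m + 1 := ⟨k - 1, by omega⟩
    rw [aCoef_succ_succ, ih (by omega), ih (by omega), sub_zero, mul_zero]

theorem aCoef_one_one : aCoef 1 1 = 1 := by
  simp [aCoef, sum_range_succ]

theorem sum_Icc_one_eq_sum_range {M : Type*} [AddCommMonoid M] (f : ℕ → M) (m : ℕ) :
    ∑ k ∈ Icc 1 m, f k = ∑ i ∈ range m, f (i + 1) := by
  rw [range_eq_Ico, sum_Ico_add', ← Ico_add_one_right_eq_Icc, zero_add]

theorem hasDerivAt_sum_div_mul_pow (a : ℕ → ℝ) (n : ℕ) (x : ℝ) :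
    HasDerivAt (fun y => ∑ i ∈ range n, a i / (i + 1) * y ^ (i + 1))
      (∑ i ∈ range n, a i * x ^ i) x := by
  refine HasDerivAt.fun_sum fun i _ => ?_
  refine ((hasDerivAt_pow (i + 1) x).const_mul (a i / (i + 1))).congr_deriv ?_
  rw [Nat.add_sub_cancel]
  push_cast
  field_simp

theorem mul_one_sub_mul_sum_aCoef {n : ℕ} (hn : n ≠ 0) (x : ℝ) :
    x * (1 - x) * ∑ i ∈ range n, aCoef (i + 1) n * x ^ i =
      ∑ i ∈ range (n + 1), aCoef (i + 1) (n + 1) / (i + 1) * x ^ (i + 1) := by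
  have hterm (i : ℕ) : aCoef (i + 1) (n + 1) / (i + 1) * x ^ (i + 1) =
      aCoef (i + 1) n * x ^ (i + 1) - aCoef i n * x ^ (i + 1) := by
    rw [aCoef_succ_succ]
    field_simp
  rw [sum_congr rfl fun i _ => hterm i, sum_sub_distrib, sum_range_succ,
    aCoef_eq_zero_of_lt (Nat.lt_succ_self n), sum_range_succ', aCoef_zero_left hn]
  simp only [zero_mul, add_zero, mul_sum, ← sum_sub_distrib]
  exact sum_congr rfl fun i _ => by ring

theorem eq_sum_aCoef_of_cumulant_rec (c : ℕ → ℝ → ℝ) (hc1 : ∀ x : ℝ, c 1 x = x)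
    (hrec : ∀ n : ℕ, 1 ≤ n → ∀ x : ℝ, c (n + 1) x = x * (1 - x) * deriv (c n) x)
    {n : ℕ} (hn : 1 ≤ n) :
    c n = fun x => ∑ i ∈ range n, aCoef (i + 1) n / (i + 1) * x ^ (i + 1) := by
  induction n, hn using Nat.le_induction with
  | base => funext x; simp [hc1, aCoef_one_one]
  | succ n hn ih =>
    funext x
    rw [hrec n hn, ih, (hasDerivAt_sum_div_mul_pow (fun i => aCoef (i + 1) n) n x).deriv,
      mul_one_sub_mul_sum_aCoef (by omega)]

theorem bernoulli_cumulant_explicit_general (c : ℕ → ℝ → ℝ)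
    (hc1 : ∀ x : ℝ, c 1 x = x)
    (hrec : ∀ n : ℕ, 1 ≤ n → ∀ x : ℝ, c (n + 1) x = x * (1 - x) * deriv (c n) x)
    (n : ℕ) (hn : 2 ≤ n) (x : ℝ) :
    c n x = x * (1 - x) * ∑ k ∈ Finset.Icc 1 (n - 1), aCoef k (n - 1) * x ^ (k - 1) := by
  obtain ⟨m, rfl⟩ : ∃ m, n = m + 1 := ⟨n - 1, by omega⟩
  rw [hrec m (by omega), eq_sum_aCoef_of_cumulant_rec c hc1 hrec (by omega),
    (hasDerivAt_sum_div_mul_pow (fun i => aCoef (i + 1) m) m x).deriv, Nat.add_sub_cancel,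
    sum_Icc_one_eq_sum_range]
  simp only [Nat.add_sub_cancel]

theorem bernoulli_cumulant_explicit (c : ℕ → ℝ → ℝ)
    (hc1 : ∀ x : ℝ, c 1 x = x)
    (hrec : ∀ n : ℕ, 1 ≤ n → ∀ x : ℝ, c (n + 1) x = x * (1 - x) * deriv (c n) x)
    (n : ℕ) (hn : 2 ≤ n) (x : ℝ) (hx : x ∈ Set.Ioo (0:ℝ) 1) :
    c n x = x * (1 - x) * ∑ k ∈ Finset.Icc 1 (n - 1), aCoef k (n - 1) * x ^ (k - 1) :=
  bernoulli_cumulant_explicit_general c hc1 hrec n hn x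
end
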